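/- arXiv:1303.5106 — 2 statements merged into one kernel-verified Lean document; each statement's English description precedes it below -/
import Mathlib

section
/- Under the same hypotheses (A local with involution, fixed ring R central, d + d* = 1, V free of rank m with non-degenerate hermitian form h), V has an orthogonal basis u_1, ..., u_m, and for any orthogonal basis each h(u_i, u_i) is a unit of R. -/
open MulOpposite

/-- A `*`-hermitian form on a right `A`-module `V` (right modules are encoded as
modules over the opposite ring `Aᵐᵒᵖ`): it is additive and `A`-linear in the second
variable and satisfies `h v u = (h u v)*`. -/
structure HermitianForm (A V : Type*) [Ring A] [StarRing A] [AddCommGroup V]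
    [Module Aᵐᵒᵖ V] where
  toFun : V → V → A
  add_right : ∀ u v w : V, toFun u (v + w) = toFun u v + toFun u w
  smul_right : ∀ (a : A) (u v : V), toFun u (op a • v) = toFun u v * a
  conj_symm : ∀ u v : V, toFun v u = star (toFun u v)

namespace HermitianForm

variable {A V : Type*} [Ring A] [StarRing A] [AddCommGroup V] [Module Aᵐᵒᵖ V]

/-- Non-degeneracy: the map `u ↦ h u -` is a bijection of `V` onto the dual module. -/
def Nondeg (h : HermitianForm A V) : Prop :=
  ∀ φ : V →ₗ[Aᵐᵒᵖ] A, ∃! u : V, ∀ v : V, h.toFun u v = φ v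

end HermitianForm

/-- A vector of the free module `V` of rank `m` is primitive if it belongs to a basis. -/
def IsPrimitive (A : Type*) {V : Type*} [Ring A] [AddCommGroup V] [Module Aᵐᵒᵖ V]
    (m : ℕ) (v : V) : Prop :=
  ∃ (b : Module.Basis (Fin m) Aᵐᵒᵖ V) (i : Fin m), b i = v

/-!
Gram–Schmidt over a local ring. Non-degeneracy puts a unit in every row of the Gram matrix
of a basis (the dual vector of a basis vector pairs with it to `1`), so in an orthogonal basis
the diagonal entries are units. To orthogonalize, treat the indices one at a time: for a new
index `k`, choose `j` with `h(u k, u j)` a unit. If neither `h(u k, u k)` nor `h(u j, u j)` is a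
unit, replacing `u k` by `u k + u j c⁻¹ d`, where `c = h(u k, u j)`, makes the length
`1 + (nonunit)` thanks to `d + d* = 1`, hence a unit; if only `h(u j, u j)` is a unit, swap `j`
and `k`. With a unit at `(k, k)`, subtracting multiples of `u k` from the other basis vectors
clears row `k`.
-/

instance IsLocalRing.toIsDedekindFiniteMonoid {R : Type*} [Ring R] [IsLocalRing R] :
    IsDedekindFiniteMonoid R where
  mul_eq_one_symm {a b} hab := by
    -- `b * a` is idempotent, and a local ring has no idempotents besides `0` and `1`
    have hidem : b * a * (b * a) = b * a := by rw [mul_assoc, ← mul_assoc a, hab, one_mul]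
    rcases IsLocalRing.isUnit_or_isUnit_of_add_one (add_sub_cancel (b * a) 1) with hu | hu
    · exact hu.mul_left_cancel (by rw [hidem, mul_one])
    · have hba : b * a = 0 :=
        hu.mul_right_eq_zero.mp (by rw [sub_mul, one_mul, hidem, sub_self])
      refine absurd ?_ (one_ne_zero (α := R))
      calc (1 : R) = a * (b * a) * b := by rw [← mul_assoc, hab, one_mul, hab]
        _ = 0 := by rw [hba, mul_zero, zero_mul]

theorem IsLocalRing.isUnit_one_add_of_not_isUnit {R : Type*} [Ring R] [IsLocalRing R] {a : R}
    (ha : ¬IsUnit a) : IsUnit (1 + a) :=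
  (isUnit_or_isUnit_of_add_one (add_neg_cancel_right 1 a)).resolve_right (by rwa [IsUnit.neg_iff])

theorem Module.Basis.exists_basis_apply_eq_add_smul {R M ι : Type*} [Ring R] [AddCommGroup M]
    [Module R M] (u : Module.Basis ι R M) (p : ι) (c : ι → R) (hc : c p = 0) :
    ∃ u' : Module.Basis ι R M, ∀ i, u' i = u i + c i • u p :=
  ⟨u.map (LinearEquiv.transvection (f := u.constr ℕ c) (v := u p) (by rw [constr_basis, hc])),
    fun i => by rw [Module.Basis.map_apply, LinearEquiv.transvection.apply, constr_basis]⟩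

namespace HermitianForm

variable {A V ι : Type*} [Ring A] [StarRing A] [AddCommGroup V] [Module Aᵐᵒᵖ V]
  (h : HermitianForm A V)

theorem apply_smul (c : Aᵐᵒᵖ) (u v : V) : h.toFun u (c • v) = h.toFun u v * unop c := by
  rw [← op_unop c, h.smul_right, unop_op]

theorem add_left (u v w : V) : h.toFun (u + v) w = h.toFun u w + h.toFun v w := by
  rw [h.conj_symm, h.add_right, star_add, ← h.conj_symm, ← h.conj_symm]

theorem smul_left (a : A) (u v : V) : h.toFun (op a • u) v = star a * h.toFun u v := by
  rw [h.conj_symm, h.smul_right, star_mul, ← h.conj_symm]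

theorem apply_eq_zero_comm {u v : V} : h.toFun u v = 0 ↔ h.toFun v u = 0 := by
  rw [h.conj_symm u v, star_eq_zero]

theorem apply_add_smul_self {d : A} (hd : d + star d = 1) {x y : V} {a : A}
    (ha : h.toFun x y * a = d) :
    h.toFun (x + op a • y) (x + op a • y) = 1 + (h.toFun x x + star a * (h.toFun y y * a)) := by
  have ha' : star a * h.toFun y x = star d := by
    simpa only [star_mul, ← h.conj_symm] using congrArg star ha
  rw [h.add_left, h.add_right, h.add_right, h.smul_left, h.smul_right, h.smul_left,
    h.smul_right, ha, ha', ← hd]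
  abel

def toLinearMap (u : V) : V →ₗ[Aᵐᵒᵖ] A where
  toFun := h.toFun u
  map_add' := h.add_right u
  map_smul' c v := h.apply_smul c u v

theorem apply_eq_sum_repr [Fintype ι] (b : Module.Basis ι Aᵐᵒᵖ V) (u w : V) :
    h.toFun u w = ∑ i, h.toFun u (b i) * unop (b.repr w i) := by
  conv_lhs => rw [← b.sum_repr w]
  exact (map_sum (h.toLinearMap u) _ _).trans
    (Finset.sum_congr rfl fun i _ => h.apply_smul _ _ _)

def IsOrthoOn (u : ι → V) (s : Set ι) : Prop :=
  ∀ i ∈ s, ∀ j, i ≠ j → h.toFun (u i) (u j) = 0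

variable {h}

theorem isOrthoOn_univ_iff {u : ι → V} :
    h.IsOrthoOn u Set.univ ↔ ∀ i j, i ≠ j → h.toFun (u i) (u j) = 0 := by
  simp [IsOrthoOn]

theorem IsOrthoOn.apply_eq_zero_symm {u : ι → V} {s : Set ι} (hu : h.IsOrthoOn u s) {i j : ι}
    (hi : i ∈ s) (hji : j ≠ i) : h.toFun (u j) (u i) = 0 :=
  h.apply_eq_zero_comm.mp (hu i hi j hji.symm)

theorem IsOrthoOn.exists_insert_of_isUnit [DecidableEq ι] {u : Module.Basis ι Aᵐᵒᵖ V}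
    {s : Set ι} {k : ι} (hu : h.IsOrthoOn u s) (hkk : IsUnit (h.toFun (u k) (u k))) :
    ∃ u' : Module.Basis ι Aᵐᵒᵖ V, h.IsOrthoOn u' (insert k s) := by
  obtain ⟨e, he⟩ := hkk
  let c : ι → Aᵐᵒᵖ := fun i => if i = k then 0 else op (-(↑e⁻¹ * h.toFun (u k) (u i)))
  obtain ⟨u', hu'⟩ := u.exists_basis_apply_eq_add_smul k c (if_pos rfl)
  have hu'k : u' k = u k := by simp [hu', c]
  have hu's : ∀ i ∈ s, u' i = u i := by
    intro i hi
    obtain rfl | hik := eq_or_ne i k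
    · exact hu'k
    · simp [hu', c, hik, hu.apply_eq_zero_symm hi hik.symm]
  have hrow : ∀ j ≠ k, h.toFun (u' k) (u' j) = 0 := by
    intro j hjk
    rw [hu'k, hu' j, h.add_right, h.apply_smul]
    simp only [c, if_neg hjk, unop_op, ← he, mul_neg, ← mul_assoc, Units.mul_inv, one_mul,
      add_neg_cancel]
  refine ⟨u', fun i hi j hij => ?_⟩
  obtain rfl | hik := eq_or_ne i k
  · exact hrow j hij.symm
  have hi : i ∈ s := hi.resolve_left hik
  rw [hu's i hi, hu' j, h.add_right, h.apply_smul, hu i hi j hij, hu i hi k hik, zero_mul,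
    add_zero]

variable [IsLocalRing A]

theorem Nondeg.exists_isUnit_apply_basis [Fintype ι] [DecidableEq ι] (hnd : h.Nondeg)
    (u : Module.Basis ι Aᵐᵒᵖ V) (k : ι) : ∃ j, IsUnit (h.toFun (u k) (u j)) := by
  obtain ⟨w, hw, -⟩ := hnd (u.constr ℕ (Pi.single k 1))
  have hkw : h.toFun (u k) w = 1 := by
    rw [h.conj_symm w, hw, Module.Basis.constr_basis, Pi.single_eq_same, star_one]
  rw [h.apply_eq_sum_repr u] at hkw
  obtain ⟨j, -, hj⟩ := IsLocalRing.exists_of_isUnit_sum (hkw ▸ isUnit_one)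
  exact ⟨j, isUnit_of_mul_isUnit_left hj⟩

theorem Nondeg.isUnit_apply_self [Fintype ι] [DecidableEq ι] (hnd : h.Nondeg)
    {u : Module.Basis ι Aᵐᵒᵖ V} (hu : h.IsOrthoOn u Set.univ) (i : ι) :
    IsUnit (h.toFun (u i) (u i)) := by
  obtain ⟨j, hj⟩ := hnd.exists_isUnit_apply_basis u i
  obtain rfl | hij := eq_or_ne i j
  · exact hj
  · exact absurd (hu i trivial j hij ▸ hj) not_isUnit_zero

theorem Nondeg.exists_isOrthoOn_isUnit_apply_self [Fintype ι] [DecidableEq ι] (hnd : h.Nondeg)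
    {d : A} (hd : d + star d = 1) {u : Module.Basis ι Aᵐᵒᵖ V} {s : Set ι} {k : ι}
    (hu : h.IsOrthoOn u s) (hk : k ∉ s) :
    ∃ u' : Module.Basis ι Aᵐᵒᵖ V, h.IsOrthoOn u' s ∧ IsUnit (h.toFun (u' k) (u' k)) := by
  by_cases hkk : IsUnit (h.toFun (u k) (u k))
  · exact ⟨u, hu, hkk⟩
  obtain ⟨j, hkj⟩ := hnd.exists_isUnit_apply_basis u k
  have hjs : j ∉ s := fun hjs =>
    not_isUnit_zero (hu.apply_eq_zero_symm hjs (ne_of_mem_of_not_mem hjs hk).symm ▸ hkj)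
  have hjk : j ≠ k := by rintro rfl; exact hkk hkj
  by_cases hjj : IsUnit (h.toFun (u j) (u j))
  · refine ⟨u.reindex (Equiv.swap k j), fun i hi i' hii' => ?_, by simpa using hjj⟩
    have hfix : Equiv.swap k j i = i :=
      Equiv.swap_apply_of_ne_of_ne (ne_of_mem_of_not_mem hi hk) (ne_of_mem_of_not_mem hi hjs)
    simp only [Module.Basis.reindex_apply, Equiv.symm_swap, hfix]
    exact hu i hi _ fun hi' => hii' ((Equiv.swap k j).injective (hfix.trans hi'))
  obtain ⟨e, he⟩ := hkj
  set a : A := ↑e⁻¹ * d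
  obtain ⟨u', hu'⟩ := u.exists_basis_apply_eq_add_smul j (Pi.single k (op a))
    (Pi.single_eq_of_ne hjk _)
  refine ⟨u', fun i hi i' hii' => ?_, ?_⟩
  · have hik : i ≠ k := ne_of_mem_of_not_mem hi hk
    rw [hu' i, Pi.single_eq_of_ne hik, zero_smul, add_zero, hu' i', h.add_right, h.apply_smul,
      hu i hi i' hii', hu i hi j (ne_of_mem_of_not_mem hi hjs), zero_mul, add_zero]
  have hkja : h.toFun (u k) (u j) * a = d := by
    rw [← he, ← mul_assoc, Units.mul_inv, one_mul]
  rw [hu' k, Pi.single_eq_same, h.apply_add_smul_self hd hkja]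
  exact IsLocalRing.isUnit_one_add_of_not_isUnit <| IsLocalRing.nonunits_add hkk
    fun hunit => hjj (isUnit_of_mul_isUnit_left (isUnit_of_mul_isUnit_right hunit))

theorem Nondeg.exists_basis_isOrthoOn_univ [Fintype ι] [DecidableEq ι] (hnd : h.Nondeg)
    {d : A} (hd : d + star d = 1) (b : Module.Basis ι Aᵐᵒᵖ V) :
    ∃ u : Module.Basis ι Aᵐᵒᵖ V, h.IsOrthoOn u Set.univ := by
  suffices ∀ s : Finset ι, ∃ u : Module.Basis ι Aᵐᵒᵖ V, h.IsOrthoOn u s by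
    simpa using this Finset.univ
  intro s
  induction s using Finset.induction_on with
  | empty => exact ⟨b, by simp [IsOrthoOn]⟩
  | insert k s hk ih =>
    obtain ⟨u, hu⟩ := ih
    obtain ⟨u', hu', hunit⟩ := hnd.exists_isOrthoOn_isUnit_apply_self hd hu hk
    rw [Finset.coe_insert]
    exact hu'.exists_insert_of_isUnit hunit

end HermitianForm

theorem stmt_1_general {A V : Type*} [Ring A] [StarRing A] [IsLocalRing A]
    [AddCommGroup V] [Module Aᵐᵒᵖ V]
    (d : A) (hd : d + star d = 1)
    (m : ℕ) (b : Module.Basis (Fin m) Aᵐᵒᵖ V)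
    (h : HermitianForm A V) (hnd : h.Nondeg) :
    (∃ u : Module.Basis (Fin m) Aᵐᵒᵖ V, ∀ i j : Fin m, i ≠ j → h.toFun (u i) (u j) = 0) ∧
    (∀ u : Module.Basis (Fin m) Aᵐᵒᵖ V, (∀ i j : Fin m, i ≠ j → h.toFun (u i) (u j) = 0) →
      ∀ i : Fin m, IsUnit (h.toFun (u i) (u i))) := by
  obtain ⟨u, hu⟩ := hnd.exists_basis_isOrthoOn_univ hd b
  exact ⟨⟨u, HermitianForm.isOrthoOn_univ_iff.mp hu⟩,
    fun u hu => hnd.isUnit_apply_self (HermitianForm.isOrthoOn_univ_iff.mpr hu)⟩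

/-- Lemma 2.2: `V` has an orthogonal basis, and every orthogonal basis has all
lengths units of the fixed ring `R` (lengths are automatically fixed by `*`,
and a fixed element is a unit of `R` iff it is a unit of `A`). -/
theorem stmt_1 {A V : Type*} [Ring A] [StarRing A] [IsLocalRing A]
    [AddCommGroup V] [Module Aᵐᵒᵖ V]
    (hcent : ∀ a : A, star a = a → a ∈ Set.center A)
    (d : A) (hd : d + star d = 1)
    (m : ℕ) (hm : 1 ≤ m) (b : Module.Basis (Fin m) Aᵐᵒᵖ V)
    (h : HermitianForm A V) (hnd : h.Nondeg) :
    (∃ u : Module.Basis (Fin m) Aᵐᵒᵖ V, ∀ i j : Fin m, i ≠ j → h.toFun (u i) (u j) = 0) ∧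
    (∀ u : Module.Basis (Fin m) Aᵐᵒᵖ V, (∀ i j : Fin m, i ≠ j → h.toFun (u i) (u j) = 0) →
      ∀ i : Fin m, IsUnit (h.toFun (u i) (u i))) :=
  stmt_1_general d hd m b h hnd
end

section
/- Let R be a commutative local ring with maximal ideal m, residue field F_q of odd order, with surjective squaring map on 1+m, and let c ∈ R* be such that −c is not a square in R*. Then S = R[t]/(t² + c) is a local ring with maximal ideal Sm, S/Sm is a quadratic field extension of R/m, and the norm map J : S* → R*, t₁ + t₂δ ↦ t₁² + c t₂² (where δ is the image of t), is surjective. -/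
/-!
Modulo `𝔪`, the ring `S ⧸ S𝔪` becomes `k[X] ⧸ (X² + c̄)` over the residue field `k`. A root of
`X² + c̄` in `k` would lift to a square root of `-c` in `R`: an element congruent to a unit `r`
differs from it by a factor in `1 + 𝔪`, which is a square by hypothesis. So `S ⧸ S𝔪` is a field
with `q²` elements. As `S` is finite over `R`, every maximal ideal of `S` contracts to `𝔪` and so
contains `S𝔪`, which is therefore the unique maximal ideal. For the norm, `x² + c̄y² = r̄` is
solvable in `k` since `q` is odd, and the same lifting turns a solution mod `𝔪` into an exact one.
-/

open Polynomial

namespace IsLocalRing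

variable {R : Type*} [CommRing R] [IsLocalRing R]

theorem isUnit_of_sub_mem_maximalIdeal {r a : R} (hr : IsUnit r)
    (h : a - r ∈ maximalIdeal R) : IsUnit a := by
  by_contra ha
  exact (mem_maximalIdeal r).mp (by simpa using Ideal.sub_mem _ ((mem_maximalIdeal a).mpr ha) h) hr

section SquareRootsOnePlusMaximal

variable (hsq : ∀ x ∈ maximalIdeal R, ∃ y ∈ maximalIdeal R, (1 + y) ^ 2 = 1 + x)
include hsq

theorem exists_sq_mul_eq_of_sub_mem_maximalIdeal {r a : R} (hr : IsUnit r)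
    (h : a - r ∈ maximalIdeal R) : ∃ v : R, v ^ 2 * a = r := by
  obtain ⟨a, rfl⟩ := isUnit_of_sub_mem_maximalIdeal hr h
  have hmem : r * ↑a⁻¹ - 1 ∈ maximalIdeal R := by
    have : r * ↑a⁻¹ - 1 = -((↑a - r) * ↑a⁻¹) := by
      rw [sub_mul, Units.mul_inv]; ring
    rw [this]
    exact neg_mem (Ideal.mul_mem_right _ _ h)
  obtain ⟨y, -, hy⟩ := hsq _ hmem
  exact ⟨1 + y, by rw [hy, add_sub_cancel, mul_assoc, Units.inv_mul, mul_one]⟩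

theorem residue_sq_ne_neg_of_not_exists_sq {c : R} (hc : IsUnit c)
    (hnsq : ¬ ∃ u : R, u ^ 2 = -c) (z : ResidueField R) : z ^ 2 ≠ -residue R c := by
  intro hz
  obtain ⟨u, rfl⟩ := residue_surjective z
  have hmem : u ^ 2 - -c ∈ maximalIdeal R := by
    rw [← residue_eq_zero_iff, map_sub, map_neg, map_pow, hz, sub_self]
  obtain ⟨v, hv⟩ := exists_sq_mul_eq_of_sub_mem_maximalIdeal hsq hc.neg hmem
  exact hnsq ⟨v * u, by rw [mul_pow, hv]⟩

/-- Solve the equation in the finite residue field, where it is solvable by counting squares,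
then lift. -/
theorem exists_sq_add_mul_sq_eq [Finite (ResidueField R)]
    (hodd : Odd (Nat.card (ResidueField R))) {c : R} (hc : IsUnit c) {r : R} (hr : IsUnit r) :
    ∃ t₁ t₂ : R, t₁ ^ 2 + c * t₂ ^ 2 = r := by
  have := Fintype.ofFinite (ResidueField R)
  have hc0 : residue R c ≠ 0 := (isUnit_map_iff (residue R) c).mpr hc |>.ne_zero
  have hdeg : degree (C (residue R c) * X ^ 2 - C (residue R r)) = 2 := by
    compute_degree!
  obtain ⟨a, b, hab⟩ :=
    FiniteField.exists_root_sum_quadratic (degree_X_pow (R := ResidueField R) 2) hdeg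
      (by rw [← Nat.card_eq_fintype_card, ← Nat.odd_iff]; exact hodd)
  simp only [eval_pow, eval_X, eval_sub, eval_mul, eval_C] at hab
  obtain ⟨t₁, rfl⟩ := residue_surjective a
  obtain ⟨t₂, rfl⟩ := residue_surjective b
  have hmem : t₁ ^ 2 + c * t₂ ^ 2 - r ∈ maximalIdeal R := by
    rw [← residue_eq_zero_iff]
    simp only [map_sub, map_add, map_mul, map_pow]
    linear_combination hab
  obtain ⟨v, hv⟩ := exists_sq_mul_eq_of_sub_mem_maximalIdeal hsq hr hmem
  exact ⟨v * t₁, v * t₂, by rw [← hv]; ring⟩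

end SquareRootsOnePlusMaximal

/-- Every maximal ideal of the integral extension `S` lies over `𝔪`, hence contains `S𝔪`. -/
theorem isUnit_iff_notMem_map_maximalIdeal {S : Type*} [CommRing S] [Algebra R S]
    [Algebra.IsIntegral R S] (hM : (Ideal.map (algebraMap R S) (maximalIdeal R)).IsMaximal)
    (s : S) : IsUnit s ↔ s ∉ Ideal.map (algebraMap R S) (maximalIdeal R) := by
  have hle (N : Ideal S) (hN : N.IsMaximal) : Ideal.map (algebraMap R S) (maximalIdeal R) ≤ N := by
    rw [Ideal.map_le_iff_le_comap,
      eq_maximalIdeal (Ideal.isMaximal_comap_of_isIntegral_of_isMaximal N)]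
  have : IsLocalRing S :=
    of_unique_max_ideal ⟨_, hM, fun N hN ↦ (hM.eq_of_le hN.ne_top (hle N hN)).symm⟩
  rw [eq_maximalIdeal hM, mem_maximalIdeal, mem_nonunits_iff, not_not]

end IsLocalRing

namespace AdjoinRoot

variable {R S : Type*} [CommRing R] [CommRing S] [Algebra R S] {f : R[X]}

noncomputable def quotientMapEquiv (e : S ≃ₐ[R] AdjoinRoot f) (I : Ideal R) :
    S ⧸ I.map (algebraMap R S) ≃+* AdjoinRoot (f.map (Ideal.Quotient.mk I)) :=
  (Ideal.quotientEquiv _ _ e.toRingEquiv (by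
    rw [Ideal.map_map]; congr 1; exact e.toAlgHom.comp_algebraMap.symm)).trans
    (quotAdjoinRootEquivQuotPolynomialQuot I f)

theorem natCard_eq_pow_natDegree {g : R[X]} (hg : g.Monic) :
    Nat.card (AdjoinRoot g) = Nat.card R ^ g.natDegree := by
  rw [Nat.card_congr (powerBasis' hg).basis.equivFun.toEquiv, Nat.card_fun, powerBasis'_dim,
    Nat.card_fin]

end AdjoinRoot

/-- The key construction in Proposition 3.4: for a commutative local ring `R` with
finite residue field of odd order, squaring surjective on `1 + 𝔪`, and a unit `c`
such that `-c` is not a square, the ring `S = R[t]/(t² + c)` is local with maximal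
ideal `S𝔪`, `S/S𝔪` is a quadratic extension of `R/𝔪` (it has order `q²`), and the
norm map `J : S* → R*`, `t₁ + t₂δ ↦ t₁² + c t₂²`, is surjective. -/
theorem stmt_9 (R : Type*) [CommRing R] [IsLocalRing R]
    [Finite (IsLocalRing.ResidueField R)]
    (hodd : Odd (Nat.card (IsLocalRing.ResidueField R)))
    (hsq : ∀ x ∈ IsLocalRing.maximalIdeal R,
      ∃ y ∈ IsLocalRing.maximalIdeal R, (1 + y) ^ 2 = 1 + x)
    (c : R) (hc : IsUnit c) (hnsq : ¬ ∃ u : R, u ^ 2 = -c)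
    (S : Type*) [CommRing S] [Algebra R S]
    (e : S ≃ₐ[R] AdjoinRoot (X ^ 2 + C c))
    (M : Ideal S) (hM : M = Ideal.map (algebraMap R S) (IsLocalRing.maximalIdeal R)) :
    (∀ s : S, IsUnit s ↔ s ∉ M) ∧
    IsField (S ⧸ M) ∧
    Nat.card (S ⧸ M) = Nat.card (IsLocalRing.ResidueField R) ^ 2 ∧
    (∀ r : R, IsUnit r → ∃ t₁ t₂ : R, t₁ ^ 2 + c * t₂ ^ 2 = r) := by
  subst hM
  have hf : (X ^ 2 + C c).Monic := monic_X_pow_add_C c two_ne_zero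
  have hmap : (X ^ 2 + C c).map (IsLocalRing.residue R) = X ^ 2 + C (IsLocalRing.residue R c) := by
    simp
  have : Fact (Irreducible ((X ^ 2 + C c).map (IsLocalRing.residue R))) := ⟨by
    rw [hmap, ← sub_neg_eq_add, ← C_neg]
    exact X_pow_sub_C_irreducible_of_prime Nat.prime_two
      (IsLocalRing.residue_sq_ne_neg_of_not_exists_sq hsq hc hnsq)⟩
  let E : S ⧸ _ ≃+* AdjoinRoot ((X ^ 2 + C c).map (IsLocalRing.residue R)) :=
    AdjoinRoot.quotientMapEquiv e (IsLocalRing.maximalIdeal R)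
  have hfield : IsField (S ⧸ _) := E.toMulEquiv.isField (Field.toIsField _)
  have : Algebra.IsIntegral R S := by
    have := (AdjoinRoot.powerBasis' hf).finite
    have := Module.Finite.equiv e.symm.toLinearEquiv
    exact Algebra.IsIntegral.of_finite R S
  refine ⟨IsLocalRing.isUnit_iff_notMem_map_maximalIdeal
      (Ideal.Quotient.maximal_of_isField _ hfield), hfield, ?_,
    fun r hr ↦ IsLocalRing.exists_sq_add_mul_sq_eq hsq hodd hc hr⟩
  rw [Nat.card_congr E.toEquiv, AdjoinRoot.natCard_eq_pow_natDegree (hf.map _), hmap,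
    natDegree_X_pow_add_C]
end
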